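/- Each elementary symmetric polynomial can be written in terms of power sums: e_n = Σ_{|λ|=n} ε_λ z_λ^{-1} p_λ, where the sum is over partitions λ of n, ε_λ = (-1)^{|λ|−ℓ(λ)}, z_λ = Π_{i≥1} i^{m_i} m_i!, m_i is the number of parts of λ equal to i, and p_λ = p_{λ_1}⋯p_{λ_ℓ}. -/

import Mathlib

/-!
Newton's identities `n e_n = ∑_{k=1}^n (-1)^(k-1) p_k e_{n-k}` determine every `e_n` from
`e_0 = 1` and the power sums, because `n` is invertible in characteristic zero. The partition sum
satisfies the same recursion: write `n = ∑_k k m_k(λ)` for `λ ⊢ n`, and remove one part `k` from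
`λ`; this is a bijection onto the partitions of `n - k`, under which `z_λ = k m_k(λ) z_{λ ∖ k}`.
-/

open Finset MvPolynomial

namespace Multiset

/-- `z_m = ∏ i ^ mᵢ * mᵢ!`, the order of the centralizer of a permutation of cycle type `m`. -/
def centralizerCard (m : Multiset ℕ) : ℕ :=
  ∏ i ∈ m.toFinset, i ^ m.count i * (m.count i).factorial

theorem prod_pow_count_mul_factorial_of_subset {m : Multiset ℕ} {s : Finset ℕ}
    (hs : m.toFinset ⊆ s) :
    ∏ i ∈ s, i ^ m.count i * (m.count i).factorial = m.centralizerCard :=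
  (prod_subset hs fun i _ hi => by simp [count_eq_zero_of_notMem (by simpa using hi)]).symm

theorem centralizerCard_cons (k : ℕ) (m : Multiset ℕ) :
    (k ::ₘ m).centralizerCard = k * (m.count k + 1) * m.centralizerCard := by
  have hk : k ∈ (k ::ₘ m).toFinset := by simp
  rw [centralizerCard,
    ← prod_pow_count_mul_factorial_of_subset (toFinset_subset.mpr (subset_cons m k)),
    ← mul_prod_erase _ _ hk, ← mul_prod_erase _ _ hk, count_cons_self,
    prod_congr rfl fun i hi => by rw [count_cons_of_ne (ne_of_mem_erase hi)], pow_succ,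
    Nat.factorial_succ]
  ring

end Multiset

namespace Nat.Partition

theorem parts_toFinset_subset_Icc {n : ℕ} (π : n.Partition) : π.parts.toFinset ⊆ Icc 1 n :=
  fun _ hi => mem_Icc.mpr ⟨π.parts_pos (Multiset.mem_toFinset.mp hi),
    le_of_mem_parts (Multiset.mem_toFinset.mp hi)⟩

theorem card_parts_le {n : ℕ} (π : n.Partition) : Multiset.card π.parts ≤ n := by
  simpa [π.parts_sum] using Multiset.card_nsmul_le_sum fun _ h => π.parts_pos h

theorem sum_Icc_mul_count_parts {n : ℕ} (π : n.Partition) :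
    ∑ k ∈ Icc 1 n, k * π.parts.count k = n := by
  rw [← sum_subset π.parts_toFinset_subset_Icc fun k _ hk => by
    simp [Multiset.count_eq_zero_of_notMem (by simpa using hk)]]
  conv_rhs => rw [← π.parts_sum, sum_multiset_count]
  simp [mul_comm]

end Nat.Partition

theorem MvPolynomial.mul_esymm_eq_sum_Icc (σ R : Type*) [CommRing R] [Fintype σ] (n : ℕ) :
    n * esymm σ R n = ∑ k ∈ Icc 1 n, (-1) ^ (k - 1) * psum σ R k * esymm σ R (n - k) := by
  rw [mul_esymm_eq_sum, mul_sum]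
  refine sum_nbij' Prod.snd (fun k => (n - k, k)) ?_ ?_ ?_ ?_ ?_
  · rintro ⟨i, k⟩ h
    simp at h ⊢
    omega
  · intro k hk
    simp at hk ⊢
    omega
  · rintro ⟨i, k⟩ h
    simp at h ⊢
    omega
  · intro k _
    simp
  · rintro ⟨i, k⟩ h
    obtain ⟨rfl, hk⟩ : i + k = n ∧ i < n := by simpa using h
    obtain ⟨j, rfl⟩ : ∃ j, k = j + 1 := ⟨k - 1, by omega⟩
    have hsign : (-1 : MvPolynomial σ R) ^ (i + (j + 1) + 1) * (-1) ^ i = (-1) ^ j := by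
      rw [← pow_add, show i + (j + 1) + 1 + i = j + 2 * (i + 1) by ring, pow_add, pow_mul]
      simp
    rw [Nat.add_sub_cancel, Nat.add_sub_cancel, ← hsign]
    ring

theorem eq_of_mul_eq_sum_Icc {R : Type*} [Ring R] [NoZeroDivisors R] [CharZero R] (c : ℕ → R)
    {a b : ℕ → R} (h₀ : a 0 = b 0) (ha : ∀ n : ℕ, n * a n = ∑ k ∈ Icc 1 n, c k * a (n - k))
    (hb : ∀ n : ℕ, n * b n = ∑ k ∈ Icc 1 n, c k * b (n - k)) : a = b := by
  funext n
  induction n using Nat.strong_induction_on with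
  | _ n ih =>
    rcases n.eq_zero_or_pos with rfl | hn
    · exact h₀
    · refine mul_left_cancel₀ (Nat.cast_ne_zero.mpr hn.ne') ?_
      rw [ha, hb]
      exact sum_congr rfl fun k hk => by rw [ih (n - k) (by have := (mem_Icc.mp hk).1; omega)]

section PartitionExpansion

open Nat.Partition

variable {K : Type*} [Field K] (p : ℕ → K)

/-- The term `ε_λ z_λ⁻¹ p_λ` of a partition `λ = m` of `n`. -/
noncomputable def partitionTerm (n : ℕ) (m : Multiset ℕ) : K :=
  (-1) ^ (n - Multiset.card m) * (m.centralizerCard : K)⁻¹ * (m.map p).prod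

noncomputable def partitionExpansion (n : ℕ) : K :=
  ∑ π : n.Partition, partitionTerm p n π.parts

theorem partitionExpansion_zero : partitionExpansion p 0 = 1 := by
  simp [partitionExpansion, partitionTerm, Multiset.centralizerCard]

theorem mul_count_mul_partitionTerm_cons [CharZero K] {n k : ℕ} (hk : 1 ≤ k) (hkn : k ≤ n)
    {m : Multiset ℕ} (hm : Multiset.card m ≤ n - k) :
    (k * (m.count k + 1) : K) * partitionTerm p n (k ::ₘ m)
      = (-1) ^ (k - 1) * p k * partitionTerm p (n - k) m := by
  have hsign : n - Multiset.card (k ::ₘ m) = (k - 1) + (n - k - Multiset.card m) := by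
    simp only [Multiset.card_cons]
    omega
  have hk0 : (k : K) ≠ 0 := Nat.cast_ne_zero.mpr (by omega)
  rw [partitionTerm, partitionTerm, hsign, Multiset.centralizerCard_cons, Multiset.map_cons,
    Multiset.prod_cons, pow_add]
  push_cast
  field_simp

theorem mul_partitionExpansion [CharZero K] (n : ℕ) :
    n * partitionExpansion p n
      = ∑ k ∈ Icc 1 n, (-1) ^ (k - 1) * p k * partitionExpansion p (n - k) := by
  have hpart : ∀ k ∈ Icc 1 n,
      ∑ π : n.Partition, (k * π.parts.count k : K) * partitionTerm p n π.parts
        = (-1) ^ (k - 1) * p k * partitionExpansion p (n - k) := by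
    intro k hk
    obtain ⟨hk1, hkn⟩ := mem_Icc.mp hk
    rw [← sum_filter_of_ne (p := (k ∈ ·.parts)) fun π _ h => by
        contrapose! h; simp [Multiset.count_eq_zero_of_notMem h],
      sum_subtype (p := (k ∈ ·.parts)) _ (by simp),
      ← (partitionWithPartEquiv hk1 hkn).symm.sum_comp, partitionExpansion, mul_sum]
    refine sum_congr rfl fun σ _ => ?_
    rw [partitionWithPartEquiv_symm_apply_parts, Multiset.count_cons_self]
    push_cast
    exact mul_count_mul_partitionTerm_cons p hk1 hkn σ.card_parts_le
  calc (n : K) * partitionExpansion p n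
      = ∑ π : n.Partition, ∑ k ∈ Icc 1 n,
          (k * π.parts.count k : K) * partitionTerm p n π.parts := by
        simp_rw [partitionExpansion, mul_sum, ← sum_mul]
        exact_mod_cast (sum_congr rfl fun π _ => by rw [π.sum_Icc_mul_count_parts])
    _ = _ := by rw [sum_comm]; exact sum_congr rfl hpart

end PartitionExpansion

theorem eval_esymm_eq_partitionExpansion {K ι : Type*} [Field K] [CharZero K] [Fintype ι]
    (x : ι → K) (n : ℕ) :
    eval x (esymm ι K n) = partitionExpansion (fun k => eval x (psum ι K k)) n := by
  refine congrFun (eq_of_mul_eq_sum_Icc (fun k => (-1) ^ (k - 1) * eval x (psum ι K k))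
    (a := fun m => eval x (esymm ι K m)) (b := partitionExpansion _)
    ?_ (fun m => ?_) (fun m => ?_)) n
  · simp [partitionExpansion_zero]
  · simpa using congrArg (eval x) (mul_esymm_eq_sum_Icc ι K m)
  · simpa using mul_partitionExpansion _ m

/-- The elementary symmetric polynomial in terms of power sums:
`e_n = ∑_{|λ|=n} ε_λ z_λ⁻¹ p_λ`, the sum being over all partitions `λ` of `n`,
where `ε_λ = (-1)^(|λ|-ℓ(λ))`, `z_λ = ∏_{i≥1} i^{m_i} m_i!` with `m_i` the number
of parts of `λ` equal to `i`, and `p_λ = ∏ p_{λ_i}`. -/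
theorem esymm_eq_sum_over_partitions (N n : ℕ) (x : Fin N → ℝ) (p : ℕ → ℝ)
    (hp : ∀ k, p k = ∑ i : Fin N, x i ^ k) :
    (∑ s ∈ Finset.powersetCard n (Finset.univ : Finset (Fin N)), ∏ i ∈ s, x i)
      = ∑ π : Nat.Partition n,
          (-1 : ℝ) ^ (n - Multiset.card π.parts)
            * (∏ i ∈ Finset.Icc 1 n,
                ((i : ℝ) ^ (Multiset.count i π.parts)
                  * (Nat.factorial (Multiset.count i π.parts) : ℝ)))⁻¹
            * (π.parts.map p).prod := by
  have hpsum : (fun k => eval x (psum (Fin N) ℝ k)) = p := funext fun k => by simp [psum, hp]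
  have h := eval_esymm_eq_partitionExpansion x n
  rw [hpsum, esymm] at h
  simp only [map_sum, map_prod, eval_X] at h
  rw [h, partitionExpansion]
  refine sum_congr rfl fun π _ => ?_
  rw [partitionTerm, ← Multiset.prod_pow_count_mul_factorial_of_subset π.parts_toFinset_subset_Icc]
  push_cast
  rfl
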